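/- arXiv:2110.07247 — 3 statements merged into one kernel-verified Lean document; each statement's English description precedes it below -/
import Mathlib

section
/- The power series Σ_{n≥0} (C(2n,n)/4ⁿ) · x^(2n+1)/(2n+1) (the Maclaurin series of arcsin) converges for every x with |x| ≤ 1. -/
/-!
Write `aₙ = C(2n,n)/4ⁿ`. Since `aₙ₊₁ = aₙ (2n+1)/(2n+2)` and `(2n+1)(2n+3) ≤ (2n+2)²`, the
quantity `aₙ² (2n+1)` is nonincreasing, so `aₙ ≤ (n+1)^(-1/2)`. For `|x| ≤ 1` the `n`-th term of
the series is then at most `(n+1)^(-3/2)`, the term of a convergent `p`-series.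
-/

open Nat Real

lemma centralBinom_succ_div_four_pow (n : ℕ) :
    (centralBinom (n + 1) : ℝ) / 4 ^ (n + 1) =
      centralBinom n / 4 ^ n * ((2 * n + 1) / (2 * n + 2)) := by
  have h : ((n + 1 : ℕ) : ℝ) * centralBinom (n + 1) = 2 * (2 * n + 1) * centralBinom n := by
    exact_mod_cast succ_mul_centralBinom_succ n
  push_cast at h
  field_simp
  linear_combination 2 * 4 ^ n * h

lemma sq_centralBinom_div_four_pow_mul_le_one (n : ℕ) :
    ((centralBinom n : ℝ) / 4 ^ n) ^ 2 * (2 * n + 1) ≤ 1 := by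
  induction n with
  | zero => simp
  | succ n ih =>
    rw [centralBinom_succ_div_four_pow]
    have hratio : ((2 * n + 1 : ℝ) / (2 * n + 2)) ^ 2 * (2 * (n + 1 : ℕ) + 1) ≤ 2 * n + 1 := by
      rw [div_pow, div_mul_eq_mul_div, div_le_iff₀ (by positivity)]
      push_cast
      nlinarith
    calc (centralBinom n / 4 ^ n * ((2 * n + 1 : ℝ) / (2 * n + 2))) ^ 2 * (2 * (n + 1 : ℕ) + 1)
        = (centralBinom n / 4 ^ n : ℝ) ^ 2 *
            (((2 * n + 1 : ℝ) / (2 * n + 2)) ^ 2 * (2 * (n + 1 : ℕ) + 1)) := by ring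
      _ ≤ (centralBinom n / 4 ^ n : ℝ) ^ 2 * (2 * n + 1) :=
        mul_le_mul_of_nonneg_left hratio (sq_nonneg _)
      _ ≤ 1 := ih

lemma centralBinom_div_four_pow_le_rpow (n : ℕ) :
    (centralBinom n : ℝ) / 4 ^ n ≤ (n + 1 : ℝ) ^ (-(1 / 2 : ℝ)) := by
  have hpos : (0 : ℝ) < n + 1 := by positivity
  have hsq : ((centralBinom n : ℝ) / 4 ^ n) ^ 2 ≤ ((n + 1 : ℝ) ^ (-(1 / 2 : ℝ))) ^ 2 := by
    rw [rpow_neg hpos.le, ← sqrt_eq_rpow, inv_pow, sq_sqrt hpos.le, inv_eq_one_div,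
      le_div_iff₀ hpos]
    calc ((centralBinom n : ℝ) / 4 ^ n) ^ 2 * (n + 1)
        ≤ ((centralBinom n : ℝ) / 4 ^ n) ^ 2 * (2 * n + 1) := by gcongr; linarith
      _ ≤ 1 := sq_centralBinom_div_four_pow_mul_le_one n
  exact (pow_le_pow_iff_left₀ (by positivity) (by positivity) two_ne_zero).mp hsq

theorem arcsin_series_summable :
    ∀ x : ℝ, |x| ≤ 1 →
      Summable (fun n : ℕ =>
        ((Nat.choose (2 * n) n : ℝ) / 4 ^ n) * x ^ (2 * n + 1) / (2 * n + 1)) := by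
  intro x hx
  have hdom : Summable (fun n : ℕ => (n + 1 : ℝ) ^ (-(3 / 2 : ℝ))) := by
    simpa using (summable_nat_add_iff 1).mpr
      (summable_nat_rpow.mpr (by norm_num : -(3 / 2 : ℝ) < -1))
  refine Summable.of_norm_bounded hdom fun n => ?_
  have hpos : (0 : ℝ) < n + 1 := by positivity
  have hxpow : |x| ^ (2 * n + 1) ≤ 1 := pow_le_one₀ (abs_nonneg x) hx
  rw [← centralBinom_eq_two_mul_choose, norm_eq_abs, abs_div, abs_mul, abs_pow,
    abs_of_nonneg (by positivity : (0 : ℝ) ≤ centralBinom n / 4 ^ n),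
    abs_of_pos (by positivity : (0 : ℝ) < 2 * n + 1)]
  calc (centralBinom n : ℝ) / 4 ^ n * |x| ^ (2 * n + 1) / (2 * n + 1)
      ≤ (n + 1 : ℝ) ^ (-(1 / 2 : ℝ)) * 1 / (n + 1) := by
        gcongr
        · exact centralBinom_div_four_pow_le_rpow n
        · linarith
    _ = (n + 1 : ℝ) ^ (-(3 / 2 : ℝ)) := by
        rw [mul_one, div_eq_mul_inv, ← rpow_neg_one, ← rpow_add hpos]
        norm_num
end

section
/- For all x with |x| < 1, arcsin x = Σ_{n≥0} (C(2n,n)/4ⁿ) · x^(2n+1)/(2n+1). -/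
/-!
Both sides vanish at `0`, so it suffices to compare derivatives on `(-1, 1)`. The derivative of
`arcsin` is `(1 - x²)^(-1/2)`, whose binomial series has coefficients
`multichoose (1/2) n = C(2n, n) / 4ⁿ`; the right-hand side is the termwise antiderivative of that
series in `x²`, and termwise differentiation is legitimate because the coefficients are bounded.
-/

open Nat Real Metric

section CharZero

variable {K : Type*} [Field K] [CharZero K]

theorem ascPochhammer_eval_half (n : ℕ) :
    (ascPochhammer K n).eval (1 / 2) = n ! * (centralBinom n / 4 ^ n) := by
  induction n with
  | zero => simp
  | succ n ih =>
    have h : ((n + 1) * centralBinom (n + 1) : K) = 2 * (2 * n + 1) * centralBinom n := by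
      exact_mod_cast succ_mul_centralBinom_succ n
    rw [ascPochhammer_succ_eval, ih, factorial_succ, pow_succ]
    push_cast
    field_simp
    linear_combination (-2 * n ! : K) * h

theorem Ring.multichoose_half (n : ℕ) :
    Ring.multichoose (1 / 2 : K) n = centralBinom n / 4 ^ n := by
  have h := Ring.factorial_nsmul_multichoose_eq_ascPochhammer (1 / 2 : K) n
  rw [Polynomial.ascPochhammer_smeval_eq_eval, ascPochhammer_eval_half, nsmul_eq_mul] at h
  exact mul_left_cancel₀ (cast_ne_zero.2 (factorial_ne_zero n)) h

end CharZero

theorem abs_centralBinom_div_four_pow_le_one (n : ℕ) : |(centralBinom n / 4 ^ n : ℝ)| ≤ 1 := by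
  rw [abs_of_nonneg (by positivity), div_le_one (by positivity)]
  exact_mod_cast centralBinom_le_four_pow n

theorem hasSum_centralBinom_mul_pow {t : ℝ} (ht : |t| < 1) :
    HasSum (fun n ↦ (centralBinom n / 4 ^ n : ℝ) * t ^ n) (√(1 - t))⁻¹ := by
  have h := (one_div_one_sub_rpow_hasFPowerSeriesOnBall_zero (1 / 2)).hasSum
    (y := t) (by simpa [mem_eball, edist_dist] using ht)
  simp only [FormalMultilinearSeries.ofScalars_apply_eq, ← Ring.multichoose_eq,
    Ring.multichoose_half, smul_eq_mul, zero_add] at h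
  simpa [sqrt_eq_rpow] using h

theorem hasDerivAt_tsum_mul_pow_two_mul_add_one_div {c : ℕ → ℝ} {C : ℝ} (hc : ∀ n, |c n| ≤ C)
    {x : ℝ} (hx : |x| < 1) :
    HasDerivAt (fun y ↦ ∑' n : ℕ, c n * y ^ (2 * n + 1) / (2 * n + 1))
      (∑' n : ℕ, c n * x ^ (2 * n)) x := by
  obtain ⟨r, hxr, hr1⟩ := exists_between hx
  have hr : 0 < r := (abs_nonneg x).trans_lt hxr
  have hu : Summable fun n : ℕ ↦ C * r ^ (2 * n) := by
    simpa only [pow_mul] using (summable_geometric_of_lt_one (sq_nonneg r)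
      ((sq_lt_one_iff₀ hr.le).2 hr1)).mul_left C
  refine hasDerivAt_tsum_of_isPreconnected (g := fun n y ↦ c n * y ^ (2 * n + 1) / (2 * n + 1))
    (g' := fun n y ↦ c n * y ^ (2 * n)) hu isOpen_ball (convex_ball (0 : ℝ) r).isPreconnected
    (fun n y _ ↦ ?_) (fun n y hy ↦ ?_) (mem_ball_self hr) ?_ (mem_ball_zero_iff.2 hxr)
  · refine (((hasDerivAt_pow (2 * n + 1) y).const_mul (c n)).div_const _).congr_deriv ?_
    rw [Nat.add_sub_cancel]
    push_cast
    field_simp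
  · rw [mem_ball_zero_iff, norm_eq_abs] at hy
    rw [norm_mul, norm_pow, norm_eq_abs, norm_eq_abs]
    exact mul_le_mul (hc n) (pow_le_pow_left₀ (abs_nonneg y) hy.le _) (by positivity)
      ((abs_nonneg _).trans (hc n))
  · simp

theorem hasDerivAt_arcsin_series {x : ℝ} (hx : |x| < 1) :
    HasDerivAt (fun y ↦ ∑' n : ℕ, (centralBinom n / 4 ^ n : ℝ) * y ^ (2 * n + 1) / (2 * n + 1))
      (√(1 - x ^ 2))⁻¹ x := by
  have hsum := hasSum_centralBinom_mul_pow (t := x ^ 2)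
    (by rwa [abs_pow, sq_lt_one_iff₀ (abs_nonneg x)])
  simp only [← pow_mul] at hsum
  exact hsum.tsum_eq ▸
    hasDerivAt_tsum_mul_pow_two_mul_add_one_div abs_centralBinom_div_four_pow_le_one hx

theorem arcsin_eq_series :
    ∀ x : ℝ, |x| < 1 →
      Real.arcsin x =
        ∑' n : ℕ, ((Nat.choose (2 * n) n : ℝ) / 4 ^ n) * x ^ (2 * n + 1) / (2 * n + 1) := by
  intro x hx
  simp only [← centralBinom_eq_two_mul_choose]
  have hderiv : ∀ y ∈ ball (0 : ℝ) 1,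
      HasDerivAt arcsin (√(1 - y ^ 2))⁻¹ y ∧
      HasDerivAt (fun y ↦ ∑' n : ℕ, (centralBinom n / 4 ^ n : ℝ) * y ^ (2 * n + 1) / (2 * n + 1))
        (√(1 - y ^ 2))⁻¹ y := by
    intro y hy
    rw [mem_ball_zero_iff, norm_eq_abs] at hy
    obtain ⟨hy₁, hy₂⟩ := abs_lt.1 hy
    exact ⟨by simpa using hasDerivAt_arcsin hy₁.ne' hy₂.ne, hasDerivAt_arcsin_series hy⟩
  refine isOpen_ball.eqOn_of_deriv_eq (convex_ball 0 1).isPreconnected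
    (fun y hy ↦ (hderiv y hy).1.differentiableAt.differentiableWithinAt)
    (fun y hy ↦ (hderiv y hy).2.differentiableAt.differentiableWithinAt)
    (fun y hy ↦ (hderiv y hy).1.deriv.trans (hderiv y hy).2.deriv.symm)
    (mem_ball_self one_pos) (by simp) (mem_ball_zero_iff.2 hx)
end

section
/- The series Σ_{n≥0} (C(2n,n)/4ⁿ) · 1/(2n+1) converges and equals π/2. -/
/-!
The coefficients `C(2n,n)/4ⁿ` are those of the binomial series of `(1 - x)^(-1/2)`. Putting
`x = sin² θ` and multiplying by `cos θ` gives `∑ C(2n,n)/4ⁿ sin^(2n) θ cos θ = 1` for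
`0 < θ < π/2`. The terms are nonnegative and the `n`-th one integrates over `(0, π/2)` to
`C(2n,n)/4ⁿ/(2n+1)`, so monotone convergence turns the integral of `1` into the series.
-/

open Real MeasureTheory Filter Set

theorem hasSum_integral_of_hasSum_of_nonneg {α : Type*} [MeasurableSpace α] {μ : Measure α}
    {f : ℕ → α → ℝ} {F : α → ℝ} (hf : ∀ n, Integrable (f n) μ) (hF : Integrable F μ)
    (hf_nonneg : ∀ n, 0 ≤ᵐ[μ] f n) (hsum : ∀ᵐ x ∂μ, HasSum (fun n ↦ f n x) (F x)) :
    HasSum (fun n ↦ ∫ x, f n x ∂μ) (∫ x, F x ∂μ) := by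
  rw [hasSum_iff_tendsto_nat_of_nonneg fun n ↦ integral_nonneg_of_ae (hf_nonneg n)]
  simp_rw [← integral_finsetSum _ fun n _ ↦ hf n]
  refine integral_tendsto_of_tendsto_of_monotone
    (fun N ↦ integrable_finsetSum _ fun n _ ↦ hf n) hF ?_ ?_
  · filter_upwards [ae_all_iff.2 hf_nonneg] with x hx
    exact monotone_nat_of_le_succ fun N ↦ by simpa [Finset.sum_range_succ] using hx N
  · filter_upwards [hsum] with x hx
    exact hx.tendsto_sum_nat

theorem ascPochhammer_eval_one_half (n : ℕ) :
    (ascPochhammer ℝ n).eval (1 / 2) = n.factorial * n.centralBinom / 4 ^ n := by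
  induction n with
  | zero => simp
  | succ n ih =>
    have h : ((n + 1 : ℕ) : ℝ) * (n + 1).centralBinom = 2 * (2 * n + 1) * n.centralBinom := by
      exact_mod_cast Nat.succ_mul_centralBinom_succ n
    rw [ascPochhammer_succ_eval, ih, Nat.factorial_succ, pow_succ]
    push_cast at h ⊢
    linear_combination -(n.factorial : ℝ) / (4 ^ n * 4) * h

theorem Ring.multichoose_one_half (n : ℕ) :
    Ring.multichoose (1 / 2 : ℝ) n = n.centralBinom / 4 ^ n := by
  have h := Ring.factorial_nsmul_multichoose_eq_ascPochhammer (1 / 2 : ℝ) n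
  rw [Polynomial.ascPochhammer_smeval_eq_eval, ascPochhammer_eval_one_half, nsmul_eq_mul,
    mul_div_assoc] at h
  exact mul_left_cancel₀ (by positivity) h

theorem hasSum_centralBinom_div_four_pow_mul_pow {x : ℝ} (hx : |x| < 1) :
    HasSum (fun n ↦ (n.centralBinom : ℝ) / 4 ^ n * x ^ n) (1 / √(1 - x)) := by
  have h := (one_div_one_sub_rpow_hasFPowerSeriesOnBall_zero (1 / 2)).hasSum (y := x)
    (by rwa [Metric.mem_eball, edist_zero_right, ← ofReal_norm, ENNReal.ofReal_lt_one,
      norm_eq_abs])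
  simp only [FormalMultilinearSeries.ofScalars_apply_eq, ← Ring.multichoose_eq,
    Ring.multichoose_one_half, smul_eq_mul, zero_add] at h
  rwa [sqrt_eq_rpow]

theorem hasSum_centralBinom_div_four_pow_mul_sin_pow_mul_cos {θ : ℝ} (hcos : 0 < cos θ) :
    HasSum (fun n ↦ (n.centralBinom : ℝ) / 4 ^ n * (sin θ ^ (2 * n) * cos θ)) 1 := by
  have hsin : |sin θ ^ 2| < 1 := by
    rw [abs_of_nonneg (sq_nonneg _)]
    nlinarith [sin_sq_add_cos_sq θ]
  have h := (hasSum_centralBinom_div_four_pow_mul_pow hsin).mul_right (cos θ)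
  rw [← cos_sq', sqrt_sq hcos.le, one_div_mul_cancel hcos.ne'] at h
  simpa only [pow_mul, mul_assoc] using h

theorem integral_sin_pow_mul_cos (n : ℕ) :
    ∫ θ in (0)..(π / 2), sin θ ^ n * cos θ = 1 / (n + 1) := by
  simpa using integral_sin_pow_mul_cos_pow_odd (a := 0) (b := π / 2) n 0

theorem hasSum_centralBinom_div_four_pow_div_two_mul_add_one :
    HasSum (fun n : ℕ ↦ (n.centralBinom : ℝ) / 4 ^ n / (2 * n + 1)) (π / 2) := by
  have hf (n : ℕ) :
      Continuous fun θ ↦ (n.centralBinom : ℝ) / 4 ^ n * (sin θ ^ (2 * n) * cos θ) := by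
    fun_prop
  have hcos : ∀ᵐ θ ∂volume.restrict (Ioo 0 (π / 2)), 0 < cos θ :=
    (ae_restrict_mem measurableSet_Ioo).mono fun θ hθ ↦
      cos_pos_of_mem_Ioo ⟨by linarith [hθ.1, pi_pos], hθ.2⟩
  have h := hasSum_integral_of_hasSum_of_nonneg (μ := volume.restrict (Ioo 0 (π / 2)))
    (fun n ↦ (hf n).integrableOn_Icc.mono_set Ioo_subset_Icc_self) (integrable_const (1 : ℝ))
    (fun n ↦ ?nonneg) ?sum
  case nonneg =>
    filter_upwards [hcos] with θ hθ
    have := Even.pow_nonneg (even_two_mul n) (sin θ)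
    positivity
  case sum =>
    filter_upwards [hcos] with θ hθ using hasSum_centralBinom_div_four_pow_mul_sin_pow_mul_cos hθ
  convert h using 1
  · ext n
    rw [← integral_Ioc_eq_integral_Ioo, ← intervalIntegral.integral_of_le pi_div_two_pos.le,
      intervalIntegral.integral_const_mul, integral_sin_pow_mul_cos]
    push_cast
    ring
  · simp [pi_div_two_pos.le]

theorem arcsin_series_at_one :
    Summable (fun n : ℕ => ((Nat.choose (2 * n) n : ℝ) / 4 ^ n) / (2 * n + 1)) ∧
    ∑' n : ℕ, ((Nat.choose (2 * n) n : ℝ) / 4 ^ n) / (2 * n + 1) = π / 2 :=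
  ⟨hasSum_centralBinom_div_four_pow_div_two_mul_add_one.summable,
    hasSum_centralBinom_div_four_pow_div_two_mul_add_one.tsum_eq⟩
end
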